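/- arXiv:2504.00826 — 3 statements merged into one kernel-verified Lean document; each statement's English description precedes it below -/
import Mathlib

section
/- Let X be a real Banach space of dimension at least 2. Then for every t ∈ [0, 1/2), one has 2t² − 2t + 1 ≤ L_X(t) ≤ 2t² − 4t + 2. -/
/-!
Writing `t • x + (1 - t) • y = ½ (x + y) - ((1 - 2t)/2) (x - y)` and using `‖x + y‖ = ‖x - y‖`,
the triangle inequality bounds both convex combinations by `(1 - t) ‖x + y‖` when `t ≤ 1/2`,
so every ratio in the supremum is at most `2 (1 - t)²`. The pair `(x, 0)` with `x ≠ 0` is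
isosceles orthogonal and realises the ratio `t² + (1 - t)²`.
-/

/-- The geometric constant `L_X(t)` defined via isosceles orthogonality. -/
noncomputable def LX (X : Type*) [NormedAddCommGroup X] [NormedSpace ℝ X] (t : ℝ) : ℝ :=
  sSup {r : ℝ | ∃ x y : X, (x, y) ≠ (0, 0) ∧ ‖x + y‖ = ‖x - y‖ ∧
    r = (‖t • x + (1 - t) • y‖ ^ 2 + ‖(1 - t) • x + t • y‖ ^ 2) / ‖x + y‖ ^ 2}

section

variable {X : Type*} [NormedAddCommGroup X] [NormedSpace ℝ X]

lemma norm_smul_add_one_sub_smul_le {x y : X} (hxy : ‖x + y‖ = ‖x - y‖) {t : ℝ}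
    (ht : t ≤ 1 / 2) : ‖t • x + (1 - t) • y‖ ≤ (1 - t) * ‖x + y‖ := by
  have hdecomp : t • x + (1 - t) • y = (1 / 2 : ℝ) • (x + y) - ((1 - 2 * t) / 2) • (x - y) := by
    module
  calc ‖t • x + (1 - t) • y‖
      ≤ ‖(1 / 2 : ℝ) • (x + y)‖ + ‖((1 - 2 * t) / 2) • (x - y)‖ := by
        rw [hdecomp]; exact norm_sub_le _ _
    _ = 1 / 2 * ‖x + y‖ + (1 - 2 * t) / 2 * ‖x - y‖ := by
        rw [norm_smul, norm_smul, Real.norm_of_nonneg (by norm_num),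
          Real.norm_of_nonneg (by linarith)]
    _ = (1 - t) * ‖x + y‖ := by rw [← hxy]; ring

lemma add_ne_zero_of_norm_add_eq_norm_sub {x y : X} (hxy : ‖x + y‖ = ‖x - y‖)
    (hne : (x, y) ≠ (0, 0)) : x + y ≠ 0 := by
  intro hsum
  have hx : x = y := sub_eq_zero.mp (norm_eq_zero.mp (hxy ▸ hsum ▸ norm_zero))
  subst hx
  have hy : x = 0 := by simpa [← two_smul ℝ x] using hsum
  simp [hy] at hne

lemma ratio_le_of_norm_add_eq_norm_sub {x y : X} (hne : (x, y) ≠ (0, 0))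
    (hxy : ‖x + y‖ = ‖x - y‖) {t : ℝ} (ht : t ≤ 1 / 2) :
    (‖t • x + (1 - t) • y‖ ^ 2 + ‖(1 - t) • x + t • y‖ ^ 2) / ‖x + y‖ ^ 2 ≤ 2 * (1 - t) ^ 2 := by
  have hpos : 0 < ‖x + y‖ := norm_pos_iff.mpr (add_ne_zero_of_norm_add_eq_norm_sub hxy hne)
  have hyx : ‖y + x‖ = ‖y - x‖ := by rw [add_comm, hxy, norm_sub_rev]
  have h₁ := norm_smul_add_one_sub_smul_le hxy ht
  have h₂ := norm_smul_add_one_sub_smul_le hyx ht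
  rw [add_comm y, add_comm (t • y)] at h₂
  rw [div_le_iff₀ (by positivity)]
  nlinarith [mul_self_le_mul_self (norm_nonneg _) h₁, mul_self_le_mul_self (norm_nonneg _) h₂]

lemma LX_le {t : ℝ} (ht : t ≤ 1 / 2) : LX X t ≤ 2 * (1 - t) ^ 2 :=
  Real.sSup_le (fun _ ⟨_, _, hne, hxy, hr⟩ => hr ▸ ratio_le_of_norm_add_eq_norm_sub hne hxy ht)
    (by positivity)

lemma le_LX [Nontrivial X] {t : ℝ} (ht : t ≤ 1 / 2) : t ^ 2 + (1 - t) ^ 2 ≤ LX X t := by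
  obtain ⟨x, hx⟩ := exists_ne (0 : X)
  have hpos : 0 < ‖x‖ := norm_pos_iff.mpr hx
  refine le_csSup ⟨2 * (1 - t) ^ 2, fun _ ⟨_, _, hne, hxy, hr⟩ =>
    hr ▸ ratio_le_of_norm_add_eq_norm_sub hne hxy ht⟩ ⟨x, 0, by simp [hx], by simp, ?_⟩
  simp only [smul_zero, add_zero, norm_smul, Real.norm_eq_abs, mul_pow, sq_abs]
  field_simp

end

theorem stmt_0_general (X : Type*) [NormedAddCommGroup X] [NormedSpace ℝ X]
    (hdim : 2 ≤ Module.rank ℝ X) (t : ℝ) (ht : t ∈ Set.Ico (0 : ℝ) (1 / 2)) :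
    2 * t ^ 2 - 2 * t + 1 ≤ LX X t ∧ LX X t ≤ 2 * t ^ 2 - 4 * t + 2 := by
  have ht' : t ≤ 1 / 2 := ht.2.le
  have : Nontrivial X := rank_pos_iff_nontrivial.mp (lt_of_lt_of_le (by norm_num) hdim)
  constructor
  · linarith [le_LX (X := X) ht']
  · linarith [LX_le (X := X) ht']

theorem stmt_0 (X : Type*) [NormedAddCommGroup X] [NormedSpace ℝ X] [CompleteSpace X]
    (hdim : 2 ≤ Module.rank ℝ X) (t : ℝ) (ht : t ∈ Set.Ico (0 : ℝ) (1 / 2)) :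
    2 * t ^ 2 - 2 * t + 1 ≤ LX X t ∧ LX X t ≤ 2 * t ^ 2 - 4 * t + 2 :=
  stmt_0_general X hdim t ht
end

section
/- Let X be a real Banach space of dimension at least 2. Then L_X is convex on [0, 1/2): for all t₁, t₂ ∈ [0, 1/2) and all λ ∈ [0, 1], L_X(λt₁ + (1−λ)t₂) ≤ λ·L_X(t₁) + (1−λ)·L_X(t₂). -/
open Set

theorem convexOn_ciSup {ι E : Type*} [AddCommGroup E] [Module ℝ E] {s : Set E}
    (hs : Convex ℝ s) {f : ι → E → ℝ} (hf : ∀ i, ConvexOn ℝ s (f i))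
    (hbdd : ∀ x ∈ s, BddAbove (range fun i => f i x)) :
    ConvexOn ℝ s fun x => ⨆ i, f i x := by
  rcases isEmpty_or_nonempty ι with hι | hι
  · simpa only [Real.iSup_of_isEmpty] using convexOn_const (0 : ℝ) hs
  refine ⟨hs, fun x hx y hy a b ha hb hab => ciSup_le fun i => ?_⟩
  calc f i (a • x + b • y) ≤ a * f i x + b * f i y := (hf i).2 hx hy ha hb hab
    _ ≤ a * (⨆ j, f j x) + b * ⨆ j, f j y := by
      gcongr
      exacts [le_ciSup (hbdd x hx) i, le_ciSup (hbdd y hy) i]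

section Isosceles

variable {X : Type*} [NormedAddCommGroup X] [NormedSpace ℝ X]

theorem norm_le_norm_add_of_norm_add_eq_norm_sub {x y : X} (h : ‖x + y‖ = ‖x - y‖) :
    ‖x‖ ≤ ‖x + y‖ := by
  have h2x : ‖(2 : ℝ) • x‖ ≤ ‖x + y‖ + ‖x - y‖ := by
    rw [two_smul]
    simpa only [add_add_sub_cancel] using norm_add_le (x + y) (x - y)
  rw [norm_smul, ← h, Real.norm_two] at h2x
  linarith

theorem norm_smul_add_smul_le_of_norm_add_eq_norm_sub {x y : X} (h : ‖x + y‖ = ‖x - y‖)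
    (t : ℝ) : ‖t • x + (1 - t) • y‖ ≤ (|t| + |1 - t|) * ‖x + y‖ := by
  have hx := norm_le_norm_add_of_norm_add_eq_norm_sub h
  have hy : ‖y‖ ≤ ‖x + y‖ := by
    rw [add_comm] at h ⊢
    exact norm_le_norm_add_of_norm_add_eq_norm_sub (h.trans (norm_sub_rev x y))
  calc ‖t • x + (1 - t) • y‖ ≤ |t| * ‖x‖ + |1 - t| * ‖y‖ := by
        simpa only [norm_smul, Real.norm_eq_abs] using norm_add_le (t • x) ((1 - t) • y)
    _ ≤ (|t| + |1 - t|) * ‖x + y‖ := by rw [add_mul]; gcongr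

theorem convexOn_norm_smul_add_one_sub_smul_sq (x y : X) :
    ConvexOn ℝ univ fun t : ℝ => ‖t • x + (1 - t) • y‖ ^ 2 := by
  have h := (convexOn_univ_norm.comp_affineMap (AffineMap.lineMap (k := ℝ) y x)).pow
    (fun _ _ => norm_nonneg _) 2
  refine (preimage_univ ▸ h).congr fun t _ => ?_
  simp [AffineMap.lineMap_apply_module, add_comm]

noncomputable def isoscelesRatio (x y : X) (t : ℝ) : ℝ :=
  (‖t • x + (1 - t) • y‖ ^ 2 + ‖(1 - t) • x + t • y‖ ^ 2) / ‖x + y‖ ^ 2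

theorem convexOn_isoscelesRatio (x y : X) : ConvexOn ℝ univ (isoscelesRatio x y) := by
  have hsum := (convexOn_norm_smul_add_one_sub_smul_sq x y).add
    (convexOn_norm_smul_add_one_sub_smul_sq y x)
  refine (hsum.smul (inv_nonneg.2 (sq_nonneg ‖x + y‖))).congr fun t _ => ?_
  simp only [isoscelesRatio, Pi.add_apply, smul_eq_mul, add_comm ((1 - t) • x)]
  ring

theorem isoscelesRatio_le {x y : X} (h : ‖x + y‖ = ‖x - y‖) (t : ℝ) :
    isoscelesRatio x y t ≤ 2 * (|t| + |1 - t|) ^ 2 := by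
  have h₁ := norm_smul_add_smul_le_of_norm_add_eq_norm_sub h t
  have h₂ : ‖(1 - t) • x + t • y‖ ≤ (|t| + |1 - t|) * ‖x + y‖ := by
    have := norm_smul_add_smul_le_of_norm_add_eq_norm_sub h (1 - t)
    rwa [sub_sub_cancel, add_comm |1 - t|] at this
  refine div_le_of_le_mul₀ (by positivity) (by positivity) ?_
  nlinarith [norm_nonneg (t • x + (1 - t) • y), norm_nonneg ((1 - t) • x + t • y)]

variable (X) in
abbrev IsoscelesPair : Type _ := {p : X × X // p ≠ (0, 0) ∧ ‖p.1 + p.2‖ = ‖p.1 - p.2‖}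

theorem LX_eq_iSup (t : ℝ) :
    LX X t = ⨆ p : IsoscelesPair X, isoscelesRatio p.1.1 p.1.2 t := by
  refine congrArg sSup (Set.ext fun r => ⟨?_, ?_⟩)
  · rintro ⟨x, y, h0, h, rfl⟩
    exact ⟨⟨(x, y), h0, h⟩, rfl⟩
  · rintro ⟨⟨⟨x, y⟩, h0, h⟩, rfl⟩
    exact ⟨x, y, h0, h, rfl⟩

variable (X) in
theorem convexOn_LX : ConvexOn ℝ univ (LX X) := by
  rw [funext LX_eq_iSup]
  refine convexOn_ciSup convex_univ (fun p => convexOn_isoscelesRatio _ _) fun t _ => ?_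
  exact ⟨_, forall_mem_range.2 fun p => isoscelesRatio_le p.2.2 t⟩

end Isosceles

theorem stmt_4_general (X : Type*) [NormedAddCommGroup X] [NormedSpace ℝ X] (t₁ t₂ l : ℝ)
    (hl : l ∈ Set.Icc (0 : ℝ) 1) :
    LX X (l * t₁ + (1 - l) * t₂) ≤ l * LX X t₁ + (1 - l) * LX X t₂ :=
  (convexOn_LX X).2 (mem_univ t₁) (mem_univ t₂) hl.1 (sub_nonneg.2 hl.2) (add_sub_cancel l 1)

theorem stmt_4 (X : Type*) [NormedAddCommGroup X] [NormedSpace ℝ X] [CompleteSpace X]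
    (hdim : 2 ≤ Module.rank ℝ X) (t₁ t₂ l : ℝ)
    (h₁ : t₁ ∈ Set.Ico (0 : ℝ) (1 / 2)) (h₂ : t₂ ∈ Set.Ico (0 : ℝ) (1 / 2))
    (hl : l ∈ Set.Icc (0 : ℝ) 1) :
    LX X (l * t₁ + (1 - l) * t₂) ≤ l * LX X t₁ + (1 - l) * LX X t₂ :=
  stmt_4_general X t₁ t₂ l hl
end

section
/- Let X be a real Hilbert space (a complete real inner product space) of dimension at least 2. Then the function t ↦ (L_X(t) − 1)/(1 − t) is non-increasing on [0, 1/2): for all 0 ≤ t₁ ≤ t₂ < 1/2, (L_X(t₂) − 1)/(1 − t₂) ≤ (L_X(t₁) − 1)/(1 − t₁). -/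
section InnerProductSpace

variable {X : Type*} [NormedAddCommGroup X] [InnerProductSpace ℝ X]

lemma real_inner_eq_zero_of_norm_add_eq_norm_sub {x y : X} (h : ‖x + y‖ = ‖x - y‖) :
    inner ℝ x y = 0 := by
  have hadd := norm_add_sq_real x y
  rw [h, norm_sub_sq_real] at hadd
  linarith

lemma norm_smul_add_smul_sq_of_real_inner_eq_zero {x y : X} (h : inner ℝ x y = 0) (a b : ℝ) :
    ‖a • x + b • y‖ ^ 2 = a ^ 2 * ‖x‖ ^ 2 + b ^ 2 * ‖y‖ ^ 2 := by
  rw [norm_add_sq_real, real_inner_smul_left, real_inner_smul_right, h, norm_smul, norm_smul,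
    mul_pow, mul_pow, Real.norm_eq_abs, Real.norm_eq_abs, sq_abs, sq_abs]
  ring

lemma LX_quotient_eq_of_real_inner_eq_zero {x y : X} (h : inner ℝ x y = 0) (hxy : (x, y) ≠ (0, 0))
    (t : ℝ) :
    (‖t • x + (1 - t) • y‖ ^ 2 + ‖(1 - t) • x + t • y‖ ^ 2) / ‖x + y‖ ^ 2
      = t ^ 2 + (1 - t) ^ 2 := by
  have hsum : ‖x + y‖ ^ 2 = ‖x‖ ^ 2 + ‖y‖ ^ 2 := by
    simpa using norm_smul_add_smul_sq_of_real_inner_eq_zero h 1 1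
  have hsum_ne : ‖x‖ ^ 2 + ‖y‖ ^ 2 ≠ 0 := by
    contrapose! hxy
    obtain ⟨hx, hy⟩ := (add_eq_zero_iff_of_nonneg (sq_nonneg _) (sq_nonneg _)).1 hxy
    simp_all
  rw [hsum, norm_smul_add_smul_sq_of_real_inner_eq_zero h,
    norm_smul_add_smul_sq_of_real_inner_eq_zero h]
  field_simp
  ring

theorem LX_eq_of_innerProductSpace [Nontrivial X] (t : ℝ) : LX X t = t ^ 2 + (1 - t) ^ 2 := by
  obtain ⟨x₀, hx₀⟩ := exists_ne (0 : X)
  rw [LX, ← csSup_singleton (t ^ 2 + (1 - t) ^ 2)]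
  congr 1
  ext r
  constructor
  · rintro ⟨x, y, hxy, hiso, rfl⟩
    exact LX_quotient_eq_of_real_inner_eq_zero
      (real_inner_eq_zero_of_norm_add_eq_norm_sub hiso) hxy t
  · rintro rfl
    exact ⟨x₀, 0, by simp [hx₀], by simp,
      (LX_quotient_eq_of_real_inner_eq_zero (inner_zero_right x₀) (by simp [hx₀]) t).symm⟩

theorem LX_sub_one_div_one_sub_eq [Nontrivial X] {t : ℝ} (ht : t ≠ 1) :
    (LX X t - 1) / (1 - t) = -2 * t := by
  rw [LX_eq_of_innerProductSpace, div_eq_iff (sub_ne_zero.2 ht.symm)]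
  ring

end InnerProductSpace

theorem stmt_6_general (X : Type*) [NormedAddCommGroup X] [InnerProductSpace ℝ X]
    (hdim : 2 ≤ Module.rank ℝ X) (t₁ t₂ : ℝ)
    (h₁₂ : t₁ ≤ t₂) (h₂ : t₂ < 1 / 2) :
    (LX X t₂ - 1) / (1 - t₂) ≤ (LX X t₁ - 1) / (1 - t₁) := by
  have : Nontrivial X := rank_pos_iff_nontrivial.1 (lt_of_lt_of_le (by norm_num) hdim)
  rw [LX_sub_one_div_one_sub_eq (by linarith), LX_sub_one_div_one_sub_eq (by linarith)]
  linarith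

theorem stmt_6 (X : Type*) [NormedAddCommGroup X] [InnerProductSpace ℝ X] [CompleteSpace X]
    (hdim : 2 ≤ Module.rank ℝ X) (t₁ t₂ : ℝ)
    (h₁ : 0 ≤ t₁) (h₁₂ : t₁ ≤ t₂) (h₂ : t₂ < 1 / 2) :
    (LX X t₂ - 1) / (1 - t₂) ≤ (LX X t₁ - 1) / (1 - t₁) :=
  stmt_6_general X hdim t₁ t₂ h₁₂ h₂
end
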